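/- arXiv:2205.04793 — 2 statements merged into one kernel-verified Lean document; each statement's English description precedes it below -/
import Mathlib

section
/- Define e_minus(m) for a positive integer m as the minimum over nonnegative integers i ≤ n+1 and nonnegative integer tuples (a_1,...,a_k) with sum a_j d_j = m - i (requiring m - i ≥ 0) of the quantity 2*(sum a_j) + i, where d_1,...,d_k ≥ 2 and n ≥ 1. Then liminf_{m→∞} e_minus(m)/m = 2/d_max, where d_max = max_j d_j. -/
open Filter ENNReal

/-- `liminf_{m→∞} e₋(m)/m = 2/d_max`, where `e₋(m)` is the minimal R-charge degree
`2 ∑ aⱼ + i` over `0 ≤ i ≤ n+1` and exponent tuples with `∑ aⱼ dⱼ = m - i`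
(the infimum of the empty set in `ℝ≥0∞` being `⊤`). -/
theorem stmt3 (n k : ℕ) (hn : 1 ≤ n) (hk : 0 < k) (d : Fin k → ℕ) (hd : ∀ i, 2 ≤ d i)
    (dmax : ℕ) (hmax : IsGreatest (Set.range d) dmax) :
    Filter.atTop.liminf (fun m : ℕ =>
      sInf {v : ℝ≥0∞ | ∃ i ≤ n + 1, ∃ a : Fin k → ℕ, i ≤ m ∧ (∑ j, a j * d j) = m - i ∧
        v = 2 * (∑ j, (a j : ℝ≥0∞)) + (i : ℝ≥0∞)} / (m : ℝ≥0∞))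
      = 2 / (dmax : ℝ≥0∞) := by
  obtain ⟨⟨j0, hj0⟩, hub⟩ := hmax
  have hd2 : 2 ≤ dmax := hj0 ▸ hd j0
  have hdm0 : (dmax : ℝ≥0∞) ≠ 0 := by simp; omega
  have hdmt : (dmax : ℝ≥0∞) ≠ ⊤ := ENNReal.natCast_ne_top dmax
  apply le_antisymm
  · -- upper bound
    apply Filter.liminf_le_of_frequently_le'
    rw [Filter.frequently_atTop]
    intro N
    refine ⟨(N + 1) * dmax, ?_, ?_⟩
    · have : N + 1 ≤ (N + 1) * dmax := Nat.le_mul_of_pos_right _ (by omega)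
      omega
    · have hmem : (2 * ((N + 1 : ℕ) : ℝ≥0∞) + ((0 : ℕ) : ℝ≥0∞)) ∈
        {v : ℝ≥0∞ | ∃ i ≤ n + 1, ∃ a : Fin k → ℕ, i ≤ (N + 1) * dmax ∧
          (∑ j, a j * d j) = (N + 1) * dmax - i ∧
          v = 2 * (∑ j, (a j : ℝ≥0∞)) + (i : ℝ≥0∞)} := by
        refine ⟨0, by omega, fun j => if j = j0 then N + 1 else 0, by omega, ?_, ?_⟩
        · simp [ite_mul, Finset.sum_ite_eq', hj0]
        · simp [apply_ite (Nat.cast : ℕ → ℝ≥0∞), Finset.sum_ite_eq']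
      calc sInf _ / (((N + 1) * dmax : ℕ) : ℝ≥0∞)
          ≤ (2 * ((N + 1 : ℕ) : ℝ≥0∞) + ((0 : ℕ) : ℝ≥0∞)) / (((N + 1) * dmax : ℕ) : ℝ≥0∞) :=
            ENNReal.div_le_div_right (sInf_le hmem) _
        _ = 2 / (dmax : ℝ≥0∞) := by
            push_cast
            rw [add_zero, mul_comm 2 ((N : ℝ≥0∞) + 1),
              ENNReal.mul_div_mul_left _ _ (by simp) (by simp)]
  · -- lower bound
    apply Filter.le_liminf_of_le (by isBoundedDefault)
    filter_upwards [Filter.eventually_ge_atTop 1] with m hm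
    rw [ENNReal.le_div_iff_mul_le (Or.inl (by simp; omega)) (Or.inl (by simp))]
    refine le_sInf ?_
    rintro v ⟨i, hi, a, him, hsum, rfl⟩
    have h1 : m - i ≤ (∑ j, a j) * dmax := by
      rw [← hsum, Finset.sum_mul]
      exact Finset.sum_le_sum fun j _ => Nat.mul_le_mul_left _ (hub ⟨j, rfl⟩)
    have h2 : m ≤ (∑ j, a j) * dmax + i := by omega
    have hnat : 2 * m ≤ (2 * (∑ j, a j) + i) * dmax := by
      nlinarith [h2, Nat.mul_le_mul_left i hd2]
    rw [div_eq_mul_inv, mul_right_comm, ← div_eq_mul_inv,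
      ENNReal.div_le_iff_le_mul (Or.inl hdm0) (Or.inl hdmt), ← Nat.cast_sum]
    exact_mod_cast hnat
end

section
/- Define e_plus(m) for a positive integer m as the maximum over nonnegative integers i ≤ n+1 and nonnegative integer tuples (a_1,...,a_k) with sum a_j d_j = m - i of the quantity 2*(sum a_j) + i, where all d_j ≥ 2. Then limsup_{m→∞} e_plus(m)/m = 2/d_min, where d_min = min_j d_j. -/
open Filter ENNReal

/-- `limsup_{m→∞} e₊(m)/m = 2/d_min`, where `e₊(m)` is the maximal R-charge degree
`2 ∑ aⱼ + i` over `0 ≤ i ≤ n+1` and exponent tuples with `∑ aⱼ dⱼ = m - i`. -/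
theorem stmt4 (n k : ℕ) (hn : 1 ≤ n) (hk : 0 < k) (d : Fin k → ℕ) (hd : ∀ i, 2 ≤ d i)
    (dmin : ℕ) (hmin : IsLeast (Set.range d) dmin) :
    Filter.atTop.limsup (fun m : ℕ =>
      sSup {v : ℝ≥0∞ | ∃ i ≤ n + 1, ∃ a : Fin k → ℕ, i ≤ m ∧ (∑ j, a j * d j) = m - i ∧
        v = 2 * (∑ j, (a j : ℝ≥0∞)) + (i : ℝ≥0∞)} / (m : ℝ≥0∞))
      = 2 / (dmin : ℝ≥0∞) := by
  obtain ⟨⟨j0, hj0⟩, hle⟩ := hmin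
  have hd2 : 2 ≤ dmin := hj0 ▸ hd j0
  have hdpos : 0 < dmin := lt_of_lt_of_le two_pos hd2
  have hdm0 : (dmin : ℝ≥0∞) ≠ 0 := by exact_mod_cast hdpos.ne'
  have hdmt : (dmin : ℝ≥0∞) ≠ ⊤ := by simp
  set f : ℕ → ℝ≥0∞ := fun m =>
    sSup {v : ℝ≥0∞ | ∃ i ≤ n + 1, ∃ a : Fin k → ℕ, i ≤ m ∧ (∑ j, a j * d j) = m - i ∧
      v = 2 * (∑ j, (a j : ℝ≥0∞)) + (i : ℝ≥0∞)} / (m : ℝ≥0∞) with hf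
  apply le_antisymm
  · -- upper bound
    have hub : ∀ m : ℕ, 1 ≤ m → f m ≤ 2 / (dmin : ℝ≥0∞) + ((n : ℝ≥0∞) + 1) / m := by
      intro m hm
      have hm0 : (m : ℝ≥0∞) ≠ 0 := by exact_mod_cast (Nat.one_le_iff_ne_zero.mp hm)
      have hmt : (m : ℝ≥0∞) ≠ ⊤ := by simp
      have hsup : sSup {v : ℝ≥0∞ | ∃ i ≤ n + 1, ∃ a : Fin k → ℕ, i ≤ m ∧
          (∑ j, a j * d j) = m - i ∧ v = 2 * (∑ j, (a j : ℝ≥0∞)) + (i : ℝ≥0∞)}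
          ≤ 2 * (m : ℝ≥0∞) / (dmin : ℝ≥0∞) + ((n : ℝ≥0∞) + 1) := by
        apply sSup_le
        rintro v ⟨i, hi, a, him, hsum, rfl⟩
        have h1 : (∑ j, a j) * dmin ≤ m := by
          calc (∑ j, a j) * dmin = ∑ j, a j * dmin := by rw [Finset.sum_mul]
            _ ≤ ∑ j, a j * d j := by
                apply Finset.sum_le_sum
                intro j _
                exact Nat.mul_le_mul_left _ (hle ⟨j, rfl⟩)
            _ = m - i := hsum
            _ ≤ m := Nat.sub_le m i
        have h2 : (∑ j, (a j : ℝ≥0∞)) * (dmin : ℝ≥0∞) ≤ (m : ℝ≥0∞) := by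
          have := (Nat.cast_le (α := ℝ≥0∞)).mpr h1
          push_cast at this
          exact this
        have h3 : (∑ j, (a j : ℝ≥0∞)) ≤ (m : ℝ≥0∞) / (dmin : ℝ≥0∞) :=
          (ENNReal.le_div_iff_mul_le (Or.inl hdm0) (Or.inl hdmt)).mpr h2
        have h4 : (i : ℝ≥0∞) ≤ (n : ℝ≥0∞) + 1 := by exact_mod_cast hi
        calc 2 * (∑ j, (a j : ℝ≥0∞)) + (i : ℝ≥0∞)
            ≤ 2 * ((m : ℝ≥0∞) / (dmin : ℝ≥0∞)) + ((n : ℝ≥0∞) + 1) := by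
              gcongr
          _ = 2 * (m : ℝ≥0∞) / (dmin : ℝ≥0∞) + ((n : ℝ≥0∞) + 1) := by
              rw [mul_div_assoc]
      calc f m ≤ (2 * (m : ℝ≥0∞) / (dmin : ℝ≥0∞) + ((n : ℝ≥0∞) + 1)) / m :=
            ENNReal.div_le_div_right hsup _
        _ = 2 * (m : ℝ≥0∞) / (dmin : ℝ≥0∞) / m + ((n : ℝ≥0∞) + 1) / m :=
            ENNReal.add_div
        _ = 2 / (dmin : ℝ≥0∞) + ((n : ℝ≥0∞) + 1) / m := by
            congr 1
            rw [div_eq_mul_inv, div_eq_mul_inv, div_eq_mul_inv]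
            calc 2 * (m : ℝ≥0∞) * (dmin : ℝ≥0∞)⁻¹ * (m : ℝ≥0∞)⁻¹
                = 2 * (dmin : ℝ≥0∞)⁻¹ * ((m : ℝ≥0∞) * (m : ℝ≥0∞)⁻¹) := by ring
              _ = 2 * (dmin : ℝ≥0∞)⁻¹ := by
                  rw [ENNReal.mul_inv_cancel hm0 hmt, mul_one]
    have htend : Tendsto (fun m : ℕ => 2 / (dmin : ℝ≥0∞) + ((n : ℝ≥0∞) + 1) / m)
        atTop (nhds (2 / (dmin : ℝ≥0∞))) := by
      have h0 : Tendsto (fun m : ℕ => ((n : ℝ≥0∞) + 1) / m) atTop (nhds 0) := by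
        have := ENNReal.Tendsto.const_mul (a := (n : ℝ≥0∞) + 1)
          ENNReal.tendsto_inv_nat_nhds_zero (Or.inr (by simp))
        simpa [div_eq_mul_inv] using this
      have := Tendsto.const_add (2 / (dmin : ℝ≥0∞)) h0
      simpa using this
    calc atTop.limsup f ≤ atTop.limsup (fun m : ℕ => 2 / (dmin : ℝ≥0∞) + ((n : ℝ≥0∞) + 1) / m) := by
          apply Filter.limsup_le_limsup ?hA ?hB ?hC
          case hB => isBoundedDefault
          case hC => isBoundedDefault
          case hA =>
          filter_upwards [Filter.eventually_ge_atTop 1] with m hm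
          exact hub m hm
      _ = 2 / (dmin : ℝ≥0∞) := htend.limsup_eq
  · -- lower bound
    apply Filter.le_limsup_of_frequently_le'
    rw [Filter.frequently_atTop]
    intro N
    refine ⟨(N + 1) * dmin, ?_, ?_⟩
    · calc N ≤ (N + 1) * 1 := by omega
        _ ≤ (N + 1) * dmin := Nat.mul_le_mul_left _ hdpos
    · set m := (N + 1) * dmin with hm
      have hmem : (2 * ((N + 1 : ℕ) : ℝ≥0∞) + ((0 : ℕ) : ℝ≥0∞)) ∈
          {v : ℝ≥0∞ | ∃ i ≤ n + 1, ∃ a : Fin k → ℕ, i ≤ m ∧ (∑ j, a j * d j) = m - i ∧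
            v = 2 * (∑ j, (a j : ℝ≥0∞)) + (i : ℝ≥0∞)} := by
        refine ⟨0, by omega, fun j => if j = j0 then N + 1 else 0, Nat.zero_le _, ?_, ?_⟩
        · simp [Finset.sum_ite_eq', hj0, hm]
        · simp [Finset.sum_ite_eq']
      have hsup : (2 * ((N + 1 : ℕ) : ℝ≥0∞)) ≤
          sSup {v : ℝ≥0∞ | ∃ i ≤ n + 1, ∃ a : Fin k → ℕ, i ≤ m ∧ (∑ j, a j * d j) = m - i ∧
            v = 2 * (∑ j, (a j : ℝ≥0∞)) + (i : ℝ≥0∞)} := by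
        have := le_sSup hmem
        simpa using this
      have hcalc : (2 : ℝ≥0∞) / (dmin : ℝ≥0∞) = 2 * ((N + 1 : ℕ) : ℝ≥0∞) / (m : ℝ≥0∞) := by
        have hN0 : ((N + 1 : ℕ) : ℝ≥0∞) ≠ 0 := by exact_mod_cast Nat.succ_ne_zero N
        have hNt : ((N + 1 : ℕ) : ℝ≥0∞) ≠ ⊤ := by simp
        rw [hm]
        push_cast
        rw [mul_comm (2 : ℝ≥0∞), ENNReal.mul_div_mul_left _ _ (by exact_mod_cast hN0)
          (by exact_mod_cast hNt)]
      rw [hf]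
      calc (2 : ℝ≥0∞) / (dmin : ℝ≥0∞) = 2 * ((N + 1 : ℕ) : ℝ≥0∞) / (m : ℝ≥0∞) := hcalc
        _ ≤ _ := ENNReal.div_le_div_right hsup _
end
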